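/- arXiv:2208.01443 — 5 statements merged into one kernel-verified Lean document; each statement's English description precedes it below -/
import Mathlib

section
/- Fix k ≥ 1 and let C = (F, Init, P) be a deterministic transition system over input type I and state type S, with I nonempty. Then the witness system C'_k of C simulates C (semantic stratified simulation) via the projection π (ℓ, x, b) = ℓ(k-1); that is: (reset) π maps the initial states of C'_k into Init, and every s ∈ Init has a preimage among the initial states of C'_k under π; (transition) π (F'_k i w) = F i (π w) for every input i and every witness state w; (property) P'_k i w implies P i (π w) for every input i and every witness state w. -/
/-- A (deterministic) trace: `s (n+1) = F (x n) (s n)` for all `n`. -/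
def IsTrace {I S : Type*} (F : I → S → S) (x : ℕ → I) (s : ℕ → S) : Prop :=
  ∀ n, s (n + 1) = F (x n) (s n)

/-- The system `(F, Init, P)` is safe: every initialized trace satisfies the property. -/
def Safe {I S : Type*} (F : I → S → S) (Init : Set S) (P : I → S → Prop) : Prop :=
  ∀ x s, IsTrace F x s → s 0 ∈ Init → ∀ n, P (x n) (s n)

/-- `P` is `k`-inductive in `(F, Init, P)`: BMC of depth `k-1` and consecution of depth `k`. -/
def KInductive {I S : Type*} (k : ℕ) (F : I → S → S) (Init : Set S) (P : I → S → Prop) :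
    Prop :=
  (∀ x s, IsTrace F x s → s 0 ∈ Init → ∀ n < k, P (x n) (s n)) ∧
  (∀ x s, IsTrace F x s → (∀ n < k, P (x n) (s n)) → P (x k) (s k))

/-- The state type of the witness system: `k` copies of the latches,
`k-1` copies of the inputs, and `k` initialization bits. -/
abbrev WState (k : ℕ) (I S : Type*) : Type _ :=
  (Fin k → S) × (Fin (k - 1) → I) × (Fin k → Bool)

/-- The transition function of the witness system. -/
def WTrans {I S : Type*} (k : ℕ) (F : I → S → S) (i : I) (w : WState k I S) :
    WState k I S :=
  ⟨fun j => if _h : (j : ℕ) = k - 1 then F i (w.1 j) else w.1 ⟨(j : ℕ) + 1, by omega⟩,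
   fun j => if _h : (j : ℕ) = k - 2 then i else w.2.1 ⟨(j : ℕ) + 1, by omega⟩,
   fun j => if _h : (j : ℕ) = k - 1 then w.2.2 j else w.2.2 ⟨(j : ℕ) + 1, by omega⟩⟩

/-- The initial states of the witness system. -/
def WInit (k : ℕ) (hk : 0 < k) (I : Type*) {S : Type*} (Init : Set S) :
    Set (WState k I S) :=
  {w | w.1 ⟨k - 1, by omega⟩ ∈ Init ∧ w.2.2 ⟨k - 1, by omega⟩ = true ∧
       ∀ j : Fin k, (j : ℕ) < k - 1 → w.2.2 j = false}

/-- The extended input sequence `X`: `X j = x j` for `j < k - 1` and `X (k-1) = i`. -/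
def WX {I : Type*} (k : ℕ) (i : I) (x : Fin (k - 1) → I) (j : Fin k) : I :=
  if h : (j : ℕ) = k - 1 then i else x ⟨(j : ℕ), by omega⟩

/-- The property of the witness system: the conjunction of `p0`–`p4`. -/
def WProp {I S : Type*} (k : ℕ) (hk : 0 < k) (F : I → S → S) (Init : Set S)
    (P : I → S → Prop) (i : I) (w : WState k I S) : Prop :=
  (∀ j : Fin k, ∀ hj : (j : ℕ) < k - 1,
      w.2.2 j = true → w.2.2 ⟨(j : ℕ) + 1, by omega⟩ = true) ∧
  (∀ j : Fin k, ∀ hj : (j : ℕ) < k - 1,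
      w.2.2 j = true → w.1 ⟨(j : ℕ) + 1, by omega⟩ = F (WX k i w.2.1 j) (w.1 j)) ∧
  (∀ j : Fin k, w.2.2 j = true → P (WX k i w.2.1 j) (w.1 j)) ∧
  (∀ j : Fin k, 1 ≤ (j : ℕ) →
      w.2.2 ⟨(j : ℕ) - 1, by omega⟩ = false → w.2.2 j = true → w.1 j ∈ Init) ∧
  (w.2.2 ⟨k - 1, by omega⟩ = true)

section WitnessSystem

variable {I S : Type*} {k : ℕ}

theorem WTrans_fst_last (F : I → S → S) (i : I) (w : WState k I S) (h : k - 1 < k) :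
    (WTrans k F i w).1 ⟨k - 1, h⟩ = F i (w.1 ⟨k - 1, h⟩) := by
  simp [WTrans]

theorem WX_last (i : I) (x : Fin (k - 1) → I) (h : k - 1 < k) : WX k i x ⟨k - 1, h⟩ = i := by
  simp [WX]

theorem WProp.prop_last (hk : 0 < k) {F : I → S → S} {Init : Set S} {P : I → S → Prop}
    {i : I} {w : WState k I S} (hw : WProp k hk F Init P i w) :
    P i (w.1 ⟨k - 1, by omega⟩) := by
  have hlast := hw.2.2.1 ⟨k - 1, by omega⟩ hw.2.2.2.2
  rwa [WX_last] at hlast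

noncomputable def initWitness [Nonempty I] (k : ℕ) (s : S) : WState k I S :=
  (fun _ => s, fun _ => Classical.arbitrary I, fun j => decide ((j : ℕ) = k - 1))

theorem initWitness_mem_WInit [Nonempty I] (hk : 0 < k) {Init : Set S} {s : S} (hs : s ∈ Init) :
    initWitness (I := I) k s ∈ WInit k hk I Init :=
  ⟨hs, by simp [initWitness], fun j hj => by simpa [initWitness] using hj.ne⟩

end WitnessSystem

/-- The witness system `C'_k` simulates `C` via the projection
`π (ℓ, x, b) = ℓ (k-1)` (semantic stratified simulation). -/
theorem witness_simulates (k : ℕ) (hk : 0 < k)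
    {I S : Type*} [Nonempty I]
    (F : I → S → S) (Init : Set S) (P : I → S → Prop) :
    (∀ w ∈ WInit k hk I Init, w.1 ⟨k - 1, by omega⟩ ∈ Init) ∧
    (∀ s ∈ Init, ∃ w ∈ WInit k hk I Init, w.1 ⟨k - 1, by omega⟩ = s) ∧
    (∀ (i : I) (w : WState k I S),
        (WTrans k F i w).1 ⟨k - 1, by omega⟩ = F i (w.1 ⟨k - 1, by omega⟩)) ∧
    (∀ (i : I) (w : WState k I S),
        WProp k hk F Init P i w → P i (w.1 ⟨k - 1, by omega⟩)) :=
  ⟨fun _ hw => hw.1,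
   fun _ hs => ⟨initWitness k _, initWitness_mem_WInit hk hs, rfl⟩,
   fun i w => WTrans_fst_last F i w _,
   fun _ _ hw => hw.prop_last hk⟩
end

section
/- Fix k ≥ 1 and let C = (F, Init, P) be a deterministic transition system over input type I and state type S. If P is k-inductive in C, then the consecution check of depth 1 passes in the witness system C'_k, i.e., for every witness state w and all inputs i0, i1: P'_k i0 w implies P'_k i1 (F'_k i0 w). -/
/-!
Let `(ℓ, x, b)` satisfy `P'_k i₀`. By `p0` and `p4` the set bits form a final segment `m ≤ j < k`,
and by `p1`, `p2` the latches `ℓ m, …, ℓ (k-1)` followed by `F i₀ (ℓ (k-1))` form a segment of a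
trace along which `P` holds up to the last state. Either `m = 0`, and the segment has `k` states satisfying `P`, so
consecution applies to its last state; or `m > 0`, and `p3` makes `ℓ m` initial, so that state is
reachable and `P` holds there because a `k`-inductive property is an invariant. Either way the new
last latch satisfies `P` under `i₁`; every other conjunct of `P'_k i₁` after the step is a
conjunct of `P'_k i₀` before it, shifted by one position.
-/

section Traces

variable {I S : Type*} {k : ℕ} {F : I → S → S} {Init : Set S} {P : I → S → Prop}

theorem IsTrace.shift {x : ℕ → I} {s : ℕ → S} (hs : IsTrace F x s) (a : ℕ) :
    IsTrace F (fun n => x (a + n)) (fun n => s (a + n)) :=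
  fun n => hs (a + n)

def traceFrom (F : I → S → S) (x : ℕ → I) (s₀ : S) : ℕ → S
  | 0 => s₀
  | n + 1 => F (x n) (traceFrom F x s₀ n)

theorem isTrace_traceFrom (F : I → S → S) (x : ℕ → I) (s₀ : S) :
    IsTrace F x (traceFrom F x s₀) :=
  fun _ => rfl

theorem KInductive.consecution_shift (hind : KInductive k F Init P) {x : ℕ → I} {s : ℕ → S}
    (hs : IsTrace F x s) (a : ℕ) (hP : ∀ n < k, P (x (a + n)) (s (a + n))) :
    P (x (a + k)) (s (a + k)) :=
  hind.2 _ _ (hs.shift a) hP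

theorem KInductive.safe (hind : KInductive k F Init P) : Safe F Init P := by
  intro x s hs h0 n
  induction n using Nat.strong_induction_on with
  | _ n ih =>
    by_cases hn : n < k
    · exact hind.1 x s hs h0 n hn
    · obtain ⟨a, rfl⟩ : ∃ a, n = a + k := ⟨n - k, by omega⟩
      exact hind.consecution_shift hs a fun j _ => ih _ (by omega)

theorem KInductive.prop_of_isTrace (hind : KInductive k F Init P) {x : ℕ → I} {s : ℕ → S}
    (hs : IsTrace F x s) {N : ℕ} (hstart : s 0 ∈ Init ∨ k ≤ N)
    (hP : ∀ n < N, P (x n) (s n)) : P (x N) (s N) := by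
  rcases hstart with h0 | hkN
  · exact hind.safe x s hs h0 N
  · obtain ⟨a, rfl⟩ : ∃ a, N = a + k := ⟨N - k, by omega⟩
    exact hind.consecution_shift hs a fun j _ => hP _ (by omega)

theorem KInductive.prop_of_segment (hind : KInductive k F Init P) {x : ℕ → I} {L : ℕ → S}
    {m N : ℕ} (hmN : m ≤ N) (hstart : L m ∈ Init ∨ m + k ≤ N)
    (hstep : ∀ n, m ≤ n → n < N → L (n + 1) = F (x n) (L n))
    (hP : ∀ n, m ≤ n → n < N → P (x n) (L n)) : P (x N) (L N) := by
  set s := traceFrom F (fun n => x (m + n)) (L m)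
  have hsL : ∀ n, m + n ≤ N → s n = L (m + n) := by
    intro n
    induction n with
    | zero => intro _; rfl
    | succ n ih =>
      intro h
      rw [← add_assoc, hstep _ (by omega) (by omega), ← ih (by omega)]
      rfl
  obtain ⟨d, rfl⟩ : ∃ d, N = m + d := ⟨N - m, by omega⟩
  rw [← hsL d le_rfl]
  refine hind.prop_of_isTrace (N := d) (isTrace_traceFrom F (fun n => x (m + n)) _)
    (hstart.imp id fun _ => by omega) fun n hn => ?_
  show P _ (s n)
  rw [hsL n (by omega)]
  exact hP _ (by omega) (by omega)

end Traces

section WitnessSystem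

variable {I S : Type*} {k : ℕ} {F : I → S → S} {Init : Set S} {P : I → S → Prop}
  {i i' : I} {w : WState k I S}

theorem wX_of_eq {x : Fin (k - 1) → I} {j : Fin k} (hj : (j : ℕ) = k - 1) : WX k i x j = i :=
  dif_pos hj

theorem wX_wTrans {j : Fin k} (hj : (j : ℕ) < k - 1) :
    WX k i' (WTrans k F i w).2.1 j = WX k i w.2.1 ⟨j + 1, by omega⟩ := by
  simp only [WX, WTrans]
  split_ifs <;> first | rfl | omega

theorem wTrans_fst_of_lt {j : Fin k} (hj : (j : ℕ) < k - 1) :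
    (WTrans k F i w).1 j = w.1 ⟨j + 1, by omega⟩ :=
  dif_neg (by omega)

theorem wTrans_fst_of_eq {j : Fin k} (hj : (j : ℕ) = k - 1) :
    (WTrans k F i w).1 j = F i (w.1 j) :=
  dif_pos hj

theorem wTrans_snd_snd_of_lt {j : Fin k} (hj : (j : ℕ) < k - 1) :
    (WTrans k F i w).2.2 j = w.2.2 ⟨j + 1, by omega⟩ :=
  dif_neg (by omega)

theorem wTrans_snd_snd_of_eq {j : Fin k} (hj : (j : ℕ) = k - 1) :
    (WTrans k F i w).2.2 j = w.2.2 j :=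
  dif_pos hj

namespace WProp

variable {hk : 0 < k}

theorem bit_mono (hw : WProp k hk F Init P i w) {a c : Fin k} (hac : a ≤ c)
    (ha : w.2.2 a = true) : w.2.2 c = true := by
  suffices h : ∀ n, ∀ h : (a : ℕ) + n < k, w.2.2 ⟨a + n, h⟩ = true by
    obtain ⟨d, hd⟩ : ∃ d, (c : ℕ) = a + d := ⟨c - a, by omega⟩
    simpa [← hd] using h d (by omega)
  intro n
  induction n with
  | zero => exact fun _ => ha
  | succ n ih => exact fun h => hw.1 ⟨a + n, by omega⟩ (by simp; omega) (ih (by omega))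

theorem exists_bit_eq_true_iff (hw : WProp k hk F Init P i w) :
    ∃ m < k, ∀ j : Fin k, w.2.2 j = true ↔ m ≤ j := by
  classical
  have hex : ∃ n, ∃ h : n < k, w.2.2 ⟨n, h⟩ = true := ⟨k - 1, by omega, hw.2.2.2.2⟩
  obtain ⟨hmk, hm⟩ := Nat.find_spec hex
  exact ⟨Nat.find hex, hmk, fun j =>
    ⟨fun hj => Nat.find_min' hex ⟨j.2, hj⟩, fun hj => hw.bit_mono (c := j) hj hm⟩⟩

theorem wTrans_fst (hw : WProp k hk F Init P i w) {j : Fin k} (hj : w.2.2 j = true) :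
    (WTrans k F i w).1 j = F (WX k i w.2.1 j) (w.1 j) := by
  by_cases hjk : (j : ℕ) = k - 1
  · rw [wTrans_fst_of_eq hjk, wX_of_eq hjk]
  · rw [wTrans_fst_of_lt (by omega)]
    exact hw.2.1 j (by omega) hj

theorem prop_next (hw : WProp k hk F Init P i w) (hind : KInductive k F Init P) (i' : I) :
    P i' (F i (w.1 ⟨k - 1, by omega⟩)) := by
  obtain ⟨m, hmk, hbit⟩ := hw.exists_bit_eq_true_iff
  let x : ℕ → I := fun n => if h : n < k then WX k i w.2.1 ⟨n, h⟩ else i'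
  let L : ℕ → S := fun n => if h : n < k then w.1 ⟨n, h⟩ else F i (w.1 ⟨k - 1, by omega⟩)
  have hstart : L m ∈ Init ∨ m + k ≤ k := by
    rcases Nat.eq_zero_or_pos m with rfl | hm
    · exact Or.inr (Nat.zero_add k).le
    · have hprev : w.2.2 ⟨m - 1, by omega⟩ = false := by
        simpa using (hbit ⟨m - 1, by omega⟩).not.2 (by simp only; omega)
      refine Or.inl ?_
      simp only [L, dif_pos hmk]
      exact hw.2.2.2.1 ⟨m, hmk⟩ hm hprev ((hbit _).2 le_rfl)
  have hstep : ∀ n, m ≤ n → n < k → L (n + 1) = F (x n) (L n) := by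
    intro n hmn hnk
    simp only [L, x, dif_pos hnk]
    rw [← hw.wTrans_fst ((hbit ⟨n, hnk⟩).2 hmn)]
    split_ifs with h
    · exact (wTrans_fst_of_lt (j := ⟨n, hnk⟩) (by simp only; omega)).symm
    · obtain rfl : n = k - 1 := by omega
      exact (wTrans_fst_of_eq rfl).symm
  have hP : ∀ n, m ≤ n → n < k → P (x n) (L n) := by
    intro n hmn hnk
    simp only [L, x, dif_pos hnk]
    exact hw.2.2.1 _ ((hbit _).2 hmn)
  simpa [x, L] using hind.prop_of_segment hmk.le hstart hstep hP

theorem wTrans (hw : WProp k hk F Init P i w) (hnext : P i' (F i (w.1 ⟨k - 1, by omega⟩))) :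
    WProp k hk F Init P i' (WTrans k F i w) := by
  refine ⟨fun j hj hb => ?_, fun j hj hb => ?_, fun j hb => ?_, fun j hj hb₀ hb => ?_, ?_⟩
  · rw [wTrans_snd_snd_of_lt hj] at hb
    by_cases hj' : (j : ℕ) + 1 = k - 1
    · rw [wTrans_snd_snd_of_eq hj']
      exact hw.bit_mono (Fin.le_iff_val_le_val.2 le_rfl) hb
    · rw [wTrans_snd_snd_of_lt (by simp; omega)]
      exact hw.bit_mono (Fin.le_iff_val_le_val.2 (Nat.le_succ _)) hb
  · rw [wTrans_snd_snd_of_lt hj] at hb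
    rw [wX_wTrans hj, wTrans_fst_of_lt hj, hw.wTrans_fst hb]
  · by_cases hj : (j : ℕ) = k - 1
    · rw [wX_of_eq hj, wTrans_fst_of_eq hj]
      rwa [show j = ⟨k - 1, by omega⟩ from Fin.ext hj]
    · rw [wTrans_snd_snd_of_lt (by omega)] at hb
      rw [wX_wTrans (by omega), wTrans_fst_of_lt (by omega)]
      exact hw.2.2.1 _ hb
  · rw [wTrans_snd_snd_of_lt (by simp; omega)] at hb₀
    simp only [Nat.sub_add_cancel hj] at hb₀
    have hjk : (j : ℕ) < k - 1 := by
      by_contra hjk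
      rw [wTrans_snd_snd_of_eq (by omega), hb₀] at hb
      exact Bool.false_ne_true hb
    rw [wTrans_snd_snd_of_lt hjk] at hb
    rw [wTrans_fst_of_lt hjk]
    exact hw.2.2.2.1 _ (by simp) hb₀ hb
  · rw [wTrans_snd_snd_of_eq rfl]
    exact hw.2.2.2.2

end WProp

end WitnessSystem

/-- If `P` is `k`-inductive in `C`, then the consecution check of depth `1`
passes in the witness system `C'_k`. -/
theorem witness_consecution (k : ℕ) (hk : 0 < k) {I S : Type*}
    (F : I → S → S) (Init : Set S) (P : I → S → Prop)
    (hind : KInductive k F Init P) :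
    ∀ (w : WState k I S) (i0 i1 : I),
      WProp k hk F Init P i0 w → WProp k hk F Init P i1 (WTrans k F i0 w) :=
  fun _ _ i1 hw => hw.wTrans (hw.prop_next hind i1)
end

section
/- Fix k ≥ 1 and let C = (F, Init, P) be a deterministic transition system over input type I and state type S. If P'_k is 1-inductive in the witness system C'_k (i.e., for every initial state w of C'_k and every input i, P'_k i w holds; and for every witness state w and all inputs i0, i1, P'_k i0 w implies P'_k i1 (F'_k i0 w)), then the BMC check of depth k-1 passes in C: every initialized trace of C satisfies P (x n) (s n) for all n < k. -/
/-!
Sliding a window of width `k` along an initialized trace of `C` gives an initialized trace of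
`C'_k`: the window at step `m` holds the last `k` states and inputs, and its bits mark the slots
that lie at or after step `0`. A 1-inductive property holds along every initialized trace, and at
step `k - 1` all bits are set and the window is the prefix `s 0, …, s (k - 1)`, so (p2) there
is exactly the BMC claim.
-/

theorem safe_of_oneInductive {I S : Type*} {F : I → S → S} {Init : Set S} {P : I → S → Prop}
    (hinit : ∀ w ∈ Init, ∀ i, P i w) (hconsec : ∀ w i₀ i₁, P i₀ w → P i₁ (F i₀ w)) :
    Safe F Init P := by
  intro x s htr hs n
  induction n with
  | zero => exact hinit _ hs _
  | succ n ih => rw [htr n]; exact hconsec _ _ _ ih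

section TraceWindow

variable {I S : Type*} (k : ℕ) (x : ℕ → I) (s : ℕ → S)

/-- The last slot holds step `m`; slots before step `0` have bit `false` and, by truncated
subtraction, hold a copy of step `0`. -/
def traceWindow (m : ℕ) : WState k I S :=
  (fun j => s (j + m + 1 - k), fun j => x (j + m + 1 - k), fun j => decide (k ≤ j + m + 1))

variable {k x s}

theorem traceWindow_zero_mem_WInit (hk : 0 < k) {Init : Set S} (hs : s 0 ∈ Init) :
    traceWindow k x s 0 ∈ WInit k hk I Init := by
  refine ⟨?_, ?_, fun j hj => ?_⟩
  · simpa only [traceWindow, show k - 1 + 0 + 1 - k = 0 by omega] using hs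
  · simp only [traceWindow, decide_eq_true_iff]; omega
  · simp only [traceWindow, decide_eq_false_iff_not]; omega

theorem isTrace_traceWindow {F : I → S → S} (htr : IsTrace F x s) :
    IsTrace (WTrans k F) x (traceWindow k x s) := by
  intro m
  refine Prod.ext (funext fun j => ?_) (Prod.ext (funext fun j => ?_) (funext fun j => ?_))
  · by_cases h : (j : ℕ) = k - 1
    · simp only [traceWindow, WTrans, dif_pos h, show (j : ℕ) + (m + 1) + 1 - k = m + 1 by omega,
        show (j : ℕ) + m + 1 - k = m by omega, htr m]
    · simp only [traceWindow, WTrans, dif_neg h]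
      congr 1
      omega
  · by_cases h : (j : ℕ) = k - 2
    · simp only [traceWindow, WTrans, dif_pos h]
      congr 1
      omega
    · simp only [traceWindow, WTrans, dif_neg h]
      congr 1
      omega
  · simp only [traceWindow, WTrans]
    split_ifs <;> simp only [decide_eq_decide] <;> omega

theorem traceWindow_pred_fst (j : Fin k) : (traceWindow k x s (k - 1)).1 j = s j := by
  simp only [traceWindow]
  congr 1
  omega

theorem traceWindow_pred_bit (j : Fin k) : (traceWindow k x s (k - 1)).2.2 j = true := by
  simp only [traceWindow, decide_eq_true_iff]
  omega

theorem WX_traceWindow_pred (j : Fin k) :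
    WX k (x (k - 1)) (traceWindow k x s (k - 1)).2.1 j = x j := by
  unfold WX traceWindow
  split_ifs with h
  · rw [h]
  · dsimp only
    congr 1
    omega

end TraceWindow

/-- If `P'_k` is `1`-inductive in the witness system `C'_k`, then the BMC
check of depth `k-1` passes in `C`. -/
theorem witness_oneInductive_bmc (k : ℕ) (hk : 0 < k) {I S : Type*}
    (F : I → S → S) (Init : Set S) (P : I → S → Prop)
    (hbmc' : ∀ w ∈ WInit k hk I Init, ∀ i : I, WProp k hk F Init P i w)
    (hconsec' : ∀ (w : WState k I S) (i0 i1 : I),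
      WProp k hk F Init P i0 w → WProp k hk F Init P i1 (WTrans k F i0 w)) :
    ∀ x s, IsTrace F x s → s 0 ∈ Init → ∀ n < k, P (x n) (s n) := by
  intro x s htr hs n hn
  have hwitness := safe_of_oneInductive hbmc' hconsec' x (traceWindow k x s)
    (isTrace_traceWindow htr) (traceWindow_zero_mem_WInit hk hs) (k - 1)
  have hP := hwitness.2.2.1 ⟨n, hn⟩ (traceWindow_pred_bit _)
  rwa [WX_traceWindow_pred, traceWindow_pred_fst] at hP
end

section
/- (End-to-end certification soundness.) Fix k ≥ 1 and let C = (F, Init, P) be a deterministic transition system over input type I and state type S, with I nonempty. If P'_k is 1-inductive in the witness system C'_k (i.e., for every initial state w of C'_k and every input i, P'_k i w holds; and for every witness state w and all inputs i0, i1, P'_k i0 w implies P'_k i1 (F'_k i0 w)), then C is safe: every initialized trace of C satisfies P (x n) (s n) for all n. -/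
/-!
Run the witness system alongside an initialized trace `(x, s)` of `C`: at time `n` its state is
the window of the last `k` states and `k - 1` inputs of the trace, with bit `j` set exactly when
slot `j` already lies in the trace (time `n + j + 1 - k ≥ 0`). This window sequence is itself an
initialized trace of `C'_k`, so `1`-induction makes `P'_k` hold on it at every time and for every
input; conjunct `p2` at the newest slot `k - 1` is then `P (x n) (s n)`.
-/

section

variable {I S : Type*}

theorem IsTrace.forall_of_inductive {F : I → S → S} {Init : Set S} {P : I → S → Prop}
    {x : ℕ → I} {s : ℕ → S} (hinit : ∀ w ∈ Init, ∀ i, P i w)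
    (hcons : ∀ w i₀ i₁, P i₀ w → P i₁ (F i₀ w)) (h : IsTrace F x s) (h0 : s 0 ∈ Init)
    (n : ℕ) (i : I) : P i (s n) := by
  induction n generalizing i with
  | zero => exact hinit _ h0 i
  | succ n ih => rw [h n]; exact hcons _ _ _ (ih (x n))

/-- Slots with `n + j + 1 < k` precede time `0`; truncated subtraction fills them with `s 0` and
`x 0`, and their bit is `false`. -/
def window (k : ℕ) (x : ℕ → I) (s : ℕ → S) (n : ℕ) : WState k I S :=
  (fun j => s (n + j + 1 - k), fun j => x (n + j + 1 - k), fun j => decide (k ≤ n + j + 1))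

theorem isTrace_window {k : ℕ} {F : I → S → S} {x : ℕ → I} {s : ℕ → S} (h : IsTrace F x s) :
    IsTrace (WTrans k F) x (window k x s) := by
  intro n
  refine Prod.ext (funext fun j => ?_) (Prod.ext (funext fun j => ?_) (funext fun j => ?_)) <;>
    simp only [window, WTrans]
  · split_ifs with hj
    · rw [show n + 1 + j + 1 - k = n + 1 by omega, show n + j + 1 - k = n by omega, h]
    · congr 1; omega
  · split_ifs with hj <;> congr 1 <;> omega
  · split_ifs with hj <;> simp only [decide_eq_decide] <;> omega

theorem window_zero_mem_WInit {k : ℕ} (hk : 0 < k) {Init : Set S} {x : ℕ → I} {s : ℕ → S}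
    (h0 : s 0 ∈ Init) : window k x s 0 ∈ WInit k hk I Init := by
  refine ⟨?_, ?_, fun j hj => ?_⟩ <;> simp only [window]
  · rwa [show 0 + (k - 1) + 1 - k = 0 by omega]
  · simp only [decide_eq_true_eq]; omega
  · simp only [decide_eq_false_iff_not]; omega

end

theorem certification_sound_general (k : ℕ) (hk : 0 < k) {I S : Type*}
    (F : I → S → S) (Init : Set S) (P : I → S → Prop)
    (hbmc' : ∀ w ∈ WInit k hk I Init, ∀ i : I, WProp k hk F Init P i w)
    (hconsec' : ∀ (w : WState k I S) (i0 i1 : I),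
      WProp k hk F Init P i0 w → WProp k hk F Init P i1 (WTrans k F i0 w)) :
    Safe F Init P := by
  intro x s htr hinit n
  have hwitness := (isTrace_window htr).forall_of_inductive hbmc' hconsec'
    (window_zero_mem_WInit hk hinit) n (x n)
  have hnewest := hwitness.2.2.1 ⟨k - 1, by omega⟩
  simp only [window, WX, dite_true, decide_eq_true_eq] at hnewest
  rw [show n + (k - 1) + 1 - k = n by omega] at hnewest
  exact hnewest (by omega)

/-- End-to-end certification soundness: if `P'_k` is `1`-inductive in the
witness system `C'_k`, then `C` is safe. -/
theorem certification_sound (k : ℕ) (hk : 0 < k) {I S : Type*} [Nonempty I]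
    (F : I → S → S) (Init : Set S) (P : I → S → Prop)
    (hbmc' : ∀ w ∈ WInit k hk I Init, ∀ i : I, WProp k hk F Init P i w)
    (hconsec' : ∀ (w : WState k I S) (i0 i1 : I),
      WProp k hk F Init P i0 w → WProp k hk F Init P i1 (WTrans k F i0 w)) :
    Safe F Init P :=
  certification_sound_general k hk F Init P hbmc' hconsec'
end

section
/- (Soundness of k-induction.) Let C = (F, Init, P) be a deterministic transition system over input type I and state type S, and let k ≥ 1. If P is k-inductive in C, then C is safe: every initialized trace of C satisfies P (x n) (s n) for all n. -/
/-- Soundness of `k`-induction: if `P` is `k`-inductive in `C`, then `C` is safe. -/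
theorem kInduction_sound (k : ℕ) (hk : 0 < k) {I S : Type*}
    (F : I → S → S) (Init : Set S) (P : I → S → Prop)
    (hind : KInductive k F Init P) :
    Safe F Init P := by
  obtain ⟨hbmc, hcons⟩ := hind
  intro x s htr hinit n
  induction n using Nat.strong_induction_on with
  | _ n ih =>
    by_cases hn : n < k
    · exact hbmc x s htr hinit n hn
    · push_neg at hn
      have hd : n = (n - k) + k := by omega
      have := hcons (fun m => x (n - k + m)) (fun m => s (n - k + m))
        (fun m => by simpa [Nat.add_assoc] using htr (n - k + m))
        (fun m hm => ih (n - k + m) (by omega))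
      rw [hd]
      simpa using this
end
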